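/- Let g be the pp-wave metric on ℝ⁴ with smooth profile H, and let K be the 2-tensor field with K_{uu} = 1 and all other components zero. Let b ∈ (0,1) and M ∈ ℝ. Let Y be a smooth vector field and ω a smooth function on ℝ⁴ with (L_Y g)_{μν} = 2ω g_{μν} everywhere. Define the vector field Υ^μ = Y^μ + M²(u/2)·∂Y^μ/∂v + M⁴(u²/8)·∂²Y^μ/∂v² + ((1+b)/(2(1−b)))·M²·δ^μ_v·Y^u (where δ^μ_v Y^u is the vector field whose only nonzero component is Y^u, in the v-direction) and the function Ω = ω + (M²u/2)·∂ω/∂v. Then (L_Υ (g − (b/(1−b))M²K))_{μν} = 2Ω·(g_{μν} + M²K_{μν}) at every point of ℝ⁴. -/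

import Mathlib

/-- Partial derivative of a scalar function on ℝ^N in the i-th coordinate direction. -/
noncomputable def pd {N : ℕ} (f : (Fin N → ℝ) → ℝ) (i : Fin N) (x : Fin N → ℝ) : ℝ :=
  fderiv ℝ f x (Pi.single i 1)

/-- Lie derivative of a covariant 2-tensor field `T` along the vector field `V`. -/
noncomputable def lieD {N : ℕ} (V : (Fin N → ℝ) → Fin N → ℝ)
    (T : (Fin N → ℝ) → Fin N → Fin N → ℝ) (x : Fin N → ℝ) (μ ν : Fin N) : ℝ :=
  ∑ σ, (V x σ * pd (fun y => T y μ ν) σ x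
    + T x σ ν * pd (fun y => V y σ) μ x
    + T x μ σ * pd (fun y => V y σ) ν x)

/-- pp-wave metric on ℝ⁴ with coordinates (u,v,x,y) = indices (0,1,2,3) and profile H:
g_{uu} = H, g_{uv} = g_{vu} = 1, g_{xx} = g_{yy} = 1, all other components zero. -/
noncomputable def ppMetric (H : (Fin 4 → ℝ) → ℝ) (x : Fin 4 → ℝ) (μ ν : Fin 4) : ℝ :=
  if μ = 0 ∧ ν = 0 then H x
  else if (μ = 0 ∧ ν = 1) ∨ (μ = 1 ∧ ν = 0) then 1
  else if (μ = 2 ∧ ν = 2) ∨ (μ = 3 ∧ ν = 3) then 1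
  else 0

/-- The tensor K with K_{uu} = 1 and all other components zero. -/
noncomputable def ppK (x : Fin 4 → ℝ) (μ ν : Fin 4) : ℝ :=
  if μ = 0 ∧ ν = 0 then 1 else 0

lemma pd_contDiff {N : ℕ} {f : (Fin N → ℝ) → ℝ} (hf : ContDiff ℝ (⊤ : ℕ∞) f) (i : Fin N) :
    ContDiff ℝ (⊤ : ℕ∞) (pd f i) := by
  have h := hf.fderiv_right (m := (⊤ : ℕ∞)) le_rfl
  exact (ContinuousLinearMap.apply ℝ ℝ (Pi.single i 1)).contDiff.comp h

lemma pd_congr {N : ℕ} {f g : (Fin N → ℝ) → ℝ} (h : ∀ y, f y = g y) (i : Fin N) (x) :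
    pd f i x = pd g i x := by rw [funext h]

lemma pd_const {N : ℕ} (c : ℝ) (i : Fin N) (x) : pd (fun _ => c) i x = 0 := by
  simp [pd]

lemma pd_add {N : ℕ} {f g : (Fin N → ℝ) → ℝ} {x} (hf : DifferentiableAt ℝ f x)
    (hg : DifferentiableAt ℝ g x) (i : Fin N) :
    pd (fun y => f y + g y) i x = pd f i x + pd g i x := by
  simp [pd, fderiv_fun_add hf hg]

lemma pd_sub {N : ℕ} {f g : (Fin N → ℝ) → ℝ} {x} (hf : DifferentiableAt ℝ f x)
    (hg : DifferentiableAt ℝ g x) (i : Fin N) :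
    pd (fun y => f y - g y) i x = pd f i x - pd g i x := by
  simp [pd, fderiv_fun_sub hf hg]

lemma pd_neg {N : ℕ} {f : (Fin N → ℝ) → ℝ} {x} (i : Fin N) :
    pd (fun y => -f y) i x = -pd f i x := by
  simp [pd, fderiv_neg]

lemma pd_mul {N : ℕ} {f g : (Fin N → ℝ) → ℝ} {x} (hf : DifferentiableAt ℝ f x)
    (hg : DifferentiableAt ℝ g x) (i : Fin N) :
    pd (fun y => f y * g y) i x = pd f i x * g x + f x * pd g i x := by
  simp [pd, fderiv_fun_mul hf hg]; ring

lemma pd_const_mul {N : ℕ} {f : (Fin N → ℝ) → ℝ} {x} (c : ℝ) (hf : DifferentiableAt ℝ f x)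
    (i : Fin N) : pd (fun y => c * f y) i x = c * pd f i x := by
  simp [pd, fderiv_const_mul hf]

lemma diff_coord {N : ℕ} (k : Fin N) : Differentiable ℝ (fun y : Fin N → ℝ => y k) :=
  (ContinuousLinearMap.proj k : (Fin N → ℝ) →L[ℝ] ℝ).differentiable

lemma pd_coord {N : ℕ} (k i : Fin N) (x) :
    pd (fun y : Fin N → ℝ => y k) i x = if k = i then 1 else 0 := by
  rw [pd, show (fun y : Fin N → ℝ => y k)
      = (ContinuousLinearMap.proj k : (Fin N → ℝ) →L[ℝ] ℝ) from rfl,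
    ContinuousLinearMap.fderiv]
  simp [Pi.single_apply]

lemma pd_coord_mul {N : ℕ} {g : (Fin N → ℝ) → ℝ} {x} (hg : DifferentiableAt ℝ g x) (k i : Fin N) :
    pd (fun y => y k * g y) i x = (if k = i then 1 else 0) * g x + x k * pd g i x := by
  rw [pd_mul (diff_coord k x) hg, pd_coord]

lemma pd_sq_mul {N : ℕ} {g : (Fin N → ℝ) → ℝ} {x} (hg : DifferentiableAt ℝ g x) (k i : Fin N) :
    pd (fun y => (y k) ^ 2 * g y) i x
      = 2 * x k * (if k = i then 1 else 0) * g x + (x k) ^ 2 * pd g i x := by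
  have h : (fun y : Fin N → ℝ => (y k) ^ 2 * g y) = fun y => y k * (y k * g y) := by
    funext y; ring
  rw [h, pd_coord_mul (g := fun y => y k * g y) ((diff_coord k x).mul hg), pd_coord_mul hg]
  ring

lemma pd_comm {N : ℕ} {f : (Fin N → ℝ) → ℝ} (hf : ContDiff ℝ (⊤ : ℕ∞) f) (i j : Fin N) (x) :
    pd (pd f i) j x = pd (pd f j) i x := by
  have hdf : Differentiable ℝ (fderiv ℝ f) := (hf.fderiv_right (m := (⊤ : ℕ∞)) le_rfl).differentiable (by simp)
  have hsymm : ∀ v w, fderiv ℝ (fderiv ℝ f) x v w = fderiv ℝ (fderiv ℝ f) x w v := fun v w =>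
    second_derivative_symmetric (fun y => (hf.differentiable (by simp) y).hasFDerivAt)
      (hdf x).hasFDerivAt v w
  have key : ∀ v w : Fin N → ℝ, fderiv ℝ (fun y => fderiv ℝ f y v) x w
      = fderiv ℝ (fderiv ℝ f) x w v := by
    intro v w
    have h : (fun y => fderiv ℝ f y v) = (ContinuousLinearMap.apply ℝ ℝ v) ∘ (fderiv ℝ f) := rfl
    rw [h, fderiv_comp x (ContinuousLinearMap.apply ℝ ℝ v).differentiableAt (hdf x)]
    simp
  show fderiv ℝ (fun y => fderiv ℝ f y (Pi.single i 1)) x (Pi.single j 1)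
    = fderiv ℝ (fun y => fderiv ℝ f y (Pi.single j 1)) x (Pi.single i 1)
  rw [key, key, hsymm]

set_option maxHeartbeats 2000000 in
theorem stmt13
    (H : (Fin 4 → ℝ) → ℝ)
    (hH_smooth : ContDiff ℝ (⊤ : ℕ∞) H)
    (hH_indep : ∀ x : Fin 4 → ℝ, ∀ r : ℝ, H (Function.update x 1 r) = H x)
    (b M : ℝ) (hb0 : 0 < b) (hb1 : b < 1)
    (Y : (Fin 4 → ℝ) → Fin 4 → ℝ) (ω : (Fin 4 → ℝ) → ℝ)
    (hY_smooth : ∀ μ, ContDiff ℝ (⊤ : ℕ∞) (fun x => Y x μ))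
    (hω_smooth : ContDiff ℝ (⊤ : ℕ∞) ω)
    (hCKV : ∀ x μ ν, lieD Y (ppMetric H) x μ ν = 2 * ω x * ppMetric H x μ ν)
    (Υ : (Fin 4 → ℝ) → Fin 4 → ℝ)
    (hΥ : Υ = fun x μ => Y x μ
        + M ^ 2 * (x 0 / 2) * pd (fun y => Y y μ) 1 x
        + M ^ 4 * ((x 0) ^ 2 / 8) * pd (fun y => pd (fun z => Y z μ) 1 y) 1 x
        + ((1 + b) / (2 * (1 - b))) * M ^ 2 * (if μ = 1 then Y x 0 else 0))
    (Ω : (Fin 4 → ℝ) → ℝ)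
    (hΩ : Ω = fun x => ω x + (M ^ 2 * x 0 / 2) * pd ω 1 x) :
    ∀ x : Fin 4 → ℝ, ∀ μ ν : Fin 4,
      lieD Υ (fun y μ' ν' => ppMetric H y μ' ν' - (b / (1 - b)) * M ^ 2 * ppK y μ' ν') x μ ν
        = 2 * Ω x * (ppMetric H x μ ν + M ^ 2 * ppK x μ ν) := by
  -- differentiability facts
  have hb' : (1:ℝ) - b ≠ 0 := by intro h; linarith
  have cY : ∀ k : Fin 4, ContDiff ℝ (⊤ : ℕ∞) (fun y => Y y k) := hY_smooth
  have cpY : ∀ (k i : Fin 4), ContDiff ℝ (⊤ : ℕ∞) (pd (fun y => Y y k) i) := fun k i =>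
    pd_contDiff (cY k) i
  have cppY : ∀ (k i j : Fin 4), ContDiff ℝ (⊤ : ℕ∞) (pd (pd (fun y => Y y k) i) j) := fun k i j =>
    pd_contDiff (cpY k i) j
  have cpω : ∀ i : Fin 4, ContDiff ℝ (⊤ : ℕ∞) (pd ω i) := fun i => pd_contDiff hω_smooth i
  have cpH : ∀ i : Fin 4, ContDiff ℝ (⊤ : ℕ∞) (pd H i) := fun i => pd_contDiff hH_smooth i
  have dY : ∀ (k : Fin 4) x, DifferentiableAt ℝ (fun y => Y y k) x := fun k x =>
    (cY k).differentiable (by simp) x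
  have dpY : ∀ (k i : Fin 4) x, DifferentiableAt ℝ (pd (fun y => Y y k) i) x := fun k i x =>
    (cpY k i).differentiable (by simp) x
  have dppY : ∀ (k i j : Fin 4) x, DifferentiableAt ℝ (pd (pd (fun y => Y y k) i) j) x :=
    fun k i j x => (cppY k i j).differentiable (by simp) x
  have dω : ∀ x, DifferentiableAt ℝ ω x := fun x => hω_smooth.differentiable (by simp) x
  have dpω : ∀ (i : Fin 4) x, DifferentiableAt ℝ (pd ω i) x := fun i x =>
    (cpω i).differentiable (by simp) x
  have dH : ∀ x, DifferentiableAt ℝ H x := fun x => hH_smooth.differentiable (by simp) x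
  have dpH : ∀ (i : Fin 4) x, DifferentiableAt ℝ (pd H i) x := fun i x =>
    (cpH i).differentiable (by simp) x
  -- H does not depend on v
  have hH1 : ∀ x, pd H 1 x = 0 := by
    intro x
    have hupd : ∀ r : ℝ, Function.update x 1 r = x + (r - x 1) • (Pi.single 1 1 : Fin 4 → ℝ) := by
      intro r; funext j
      rcases eq_or_ne j 1 with h | h
      · subst h; simp
      · simp [Function.update_apply, h, Pi.single_apply, Ne.symm h]
    have hφ : HasDerivAt (fun r : ℝ => x + (r - x 1) • (Pi.single 1 1 : Fin 4 → ℝ))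
        (Pi.single 1 1 : Fin 4 → ℝ) (x 1) := by
      have h1 : HasDerivAt (fun r : ℝ => r - x 1) 1 (x 1) := (hasDerivAt_id _).sub_const _
      simpa using (h1.smul_const (Pi.single 1 1 : Fin 4 → ℝ)).const_add x
    have hcomp : HasDerivAt (fun r => H (x + (r - x 1) • (Pi.single 1 1 : Fin 4 → ℝ)))
        (fderiv ℝ H x (Pi.single 1 1)) (x 1) := by
      have hH' := (dH (x + ((x 1) - x 1) • (Pi.single 1 1 : Fin 4 → ℝ))).hasFDerivAt
      have h2 := hH'.comp_hasDerivAt (x 1) hφ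
      simpa [Function.comp_def] using h2
    have hconst : (fun r => H (x + (r - x 1) • (Pi.single 1 1 : Fin 4 → ℝ))) = fun _ => H x := by
      funext r; rw [← hupd r, hH_indep]
    rw [hconst] at hcomp
    have := hcomp.unique (hasDerivAt_const _ _)
    simpa [pd] using this
  have hH1' : ∀ (j : Fin 4) x, pd (pd H j) 1 x = 0 := by
    intro j x
    rw [pd_comm hH_smooth j 1 x, pd_congr hH1 j x, pd_const]
  -- CKV component equations
  have e11 : ∀ x, pd (fun y => Y y 0) 1 x = 0 := by
    intro x; have h := hCKV x 1 1
    simp [lieD, Fin.sum_univ_four, ppMetric, pd_const] at h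
    linarith
  have e12 : ∀ x, pd (fun y => Y y 2) 1 x = -pd (fun y => Y y 0) 2 x := by
    intro x; have h := hCKV x 1 2
    simp [lieD, Fin.sum_univ_four, ppMetric, pd_const] at h
    linarith
  have e13 : ∀ x, pd (fun y => Y y 3) 1 x = -pd (fun y => Y y 0) 3 x := by
    intro x; have h := hCKV x 1 3
    simp [lieD, Fin.sum_univ_four, ppMetric, pd_const] at h
    linarith
  have e22 : ∀ x, pd (fun y => Y y 2) 2 x = ω x := by
    intro x; have h := hCKV x 2 2
    simp [lieD, Fin.sum_univ_four, ppMetric, pd_const] at h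
    linarith
  have e33 : ∀ x, pd (fun y => Y y 3) 3 x = ω x := by
    intro x; have h := hCKV x 3 3
    simp [lieD, Fin.sum_univ_four, ppMetric, pd_const] at h
    linarith
  have e23 : ∀ x, pd (fun y => Y y 3) 2 x = -pd (fun y => Y y 2) 3 x := by
    intro x; have h := hCKV x 2 3
    simp [lieD, Fin.sum_univ_four, ppMetric, pd_const] at h
    linarith
  have e01 : ∀ x, pd (fun y => Y y 1) 1 x = 2 * ω x - pd (fun y => Y y 0) 0 x := by
    intro x; have h := hCKV x 0 1
    simp [lieD, Fin.sum_univ_four, ppMetric, pd_const] at h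
    rw [e11 x] at h; linarith
  have e02 : ∀ x, pd (fun y => Y y 1) 2 x = -(H x * pd (fun y => Y y 0) 2 x) - pd (fun y => Y y 2) 0 x := by
    intro x; have h := hCKV x 0 2
    simp [lieD, Fin.sum_univ_four, ppMetric, pd_const] at h
    linarith
  have e03 : ∀ x, pd (fun y => Y y 1) 3 x = -(H x * pd (fun y => Y y 0) 3 x) - pd (fun y => Y y 3) 0 x := by
    intro x; have h := hCKV x 0 3
    simp [lieD, Fin.sum_univ_four, ppMetric, pd_const] at h
    linarith
  have e00 : ∀ x, pd (fun y => Y y 1) 0 x = ω x * H x - H x * pd (fun y => Y y 0) 0 x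
      - (1/2) * (Y x 0 * pd H 0 x + Y x 2 * pd H 2 x + Y x 3 * pd H 3 x) := by
    intro x; have h := hCKV x 0 0
    simp [lieD, Fin.sum_univ_four, ppMetric, pd_const] at h
    rw [hH1 x] at h; linarith
  -- first v-derivative identities
  have f0a : ∀ (j : Fin 4) x, pd (pd (fun y => Y y 0) 1) j x = 0 := by
    intro j x; rw [pd_congr e11 j x, pd_const]
  have f0 : ∀ (j : Fin 4) x, pd (pd (fun y => Y y 0) j) 1 x = 0 := by
    intro j x; rw [pd_comm (cY 0) j 1 x]; exact f0a j x
  have f1 : ∀ (j : Fin 4) x, pd (pd (fun y => Y y 1) 1) j x = 2 * pd ω j x - pd (pd (fun y => Y y 0) 0) j x := by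
    intro j x
    rw [pd_congr e01 j x, pd_sub ((dω x).const_mul 2) (dpY 0 0 x) j,
      pd_const_mul 2 (dω x) j]
  have f2 : ∀ (j : Fin 4) x, pd (pd (fun y => Y y 2) 1) j x = -pd (pd (fun y => Y y 0) 2) j x := by
    intro j x; rw [pd_congr e12 j x, pd_neg]
  have f3 : ∀ (j : Fin 4) x, pd (pd (fun y => Y y 3) 1) j x = -pd (pd (fun y => Y y 0) 3) j x := by
    intro j x; rw [pd_congr e13 j x, pd_neg]
  have g1 : ∀ x, pd (pd (fun y => Y y 2) 1) 2 x = pd ω 1 x := by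
    intro x; rw [pd_comm (cY 2) 1 2 x]; exact pd_congr e22 1 x
  have g1' : ∀ x, pd (pd (fun y => Y y 3) 1) 3 x = pd ω 1 x := by
    intro x; rw [pd_comm (cY 3) 1 3 x]; exact pd_congr e33 1 x
  have m23 : ∀ x, pd (pd (fun y => Y y 0) 2) 3 x = 0 := by
    intro x
    have t1 : pd (pd (fun y => Y y 3) 2) 1 x = -pd (pd (fun y => Y y 2) 3) 1 x := by
      rw [pd_congr e23 1 x, pd_neg]
    rw [pd_comm (cY 3) 2 1 x, f3 2 x, pd_comm (cY 2) 3 1 x, f2 3 x] at t1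
    have t2 : pd (pd (fun y => Y y 0) 3) 2 x = pd (pd (fun y => Y y 0) 2) 3 x := pd_comm (cY 0) 3 2 x
    linarith
  have m23' : ∀ x, pd (pd (fun y => Y y 0) 3) 2 x = 0 := by
    intro x; rw [pd_comm (cY 0) 3 2 x]; exact m23 x
  have gom2 : ∀ x, pd ω 2 x = pd (pd (fun y => Y y 0) 2) 0 x := by
    intro x
    have s1 := f1 2 x
    have s2 : pd (pd (fun y => Y y 1) 1) 2 x = pd (pd (fun y => Y y 1) 2) 1 x := pd_comm (cY 1) 1 2 x
    have s3 : pd (pd (fun y => Y y 1) 2) 1 x = pd (pd (fun y => Y y 0) 2) 0 x := by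
      rw [pd_congr e02 1 x,
        pd_sub (((dH x).fun_mul (dpY 0 2 x)).fun_neg) (dpY 2 0 x) 1, pd_neg,
        pd_mul (dH x) (dpY 0 2 x) 1, hH1 x, pd_comm (cY 2) 0 1 x, f2 0 x, f0 2 x]
      ring
    have s5 : pd (pd (fun y => Y y 0) 0) 2 x = pd (pd (fun y => Y y 0) 2) 0 x := pd_comm (cY 0) 0 2 x
    linarith
  have gom3 : ∀ x, pd ω 3 x = pd (pd (fun y => Y y 0) 3) 0 x := by
    intro x
    have s1 := f1 3 x
    have s2 : pd (pd (fun y => Y y 1) 1) 3 x = pd (pd (fun y => Y y 1) 3) 1 x := pd_comm (cY 1) 1 3 x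
    have s3 : pd (pd (fun y => Y y 1) 3) 1 x = pd (pd (fun y => Y y 0) 3) 0 x := by
      rw [pd_congr e03 1 x,
        pd_sub (((dH x).fun_mul (dpY 0 3 x)).fun_neg) (dpY 3 0 x) 1, pd_neg,
        pd_mul (dH x) (dpY 0 3 x) 1, hH1 x, pd_comm (cY 3) 0 1 x, f3 0 x, f0 3 x]
      ring
    have s5 : pd (pd (fun y => Y y 0) 0) 3 x = pd (pd (fun y => Y y 0) 3) 0 x := pd_comm (cY 0) 0 3 x
    linarith
  have gom0 : ∀ x, pd ω 0 x = (1/2) * pd (pd (fun y => Y y 0) 0) 0 x + (1/2) * (pd ω 1 x * H x)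
      - (1/4) * (pd (fun y => Y y 2) 1 x * pd H 2 x + pd (fun y => Y y 3) 1 x * pd H 3 x) := by
    intro x
    have s1 := f1 0 x
    have s2 : pd (pd (fun y => Y y 1) 1) 0 x = pd (pd (fun y => Y y 1) 0) 1 x := pd_comm (cY 1) 1 0 x
    have s3 : pd (pd (fun y => Y y 1) 0) 1 x = pd ω 1 x * H x
        - (1/2) * (pd (fun y => Y y 2) 1 x * pd H 2 x + pd (fun y => Y y 3) 1 x * pd H 3 x) := by
      have hsum : DifferentiableAt ℝ
          (fun y => Y y 0 * pd H 0 y + Y y 2 * pd H 2 y + Y y 3 * pd H 3 y) x :=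
        (((dY 0 x).mul (dpH 0 x)).add ((dY 2 x).mul (dpH 2 x))).add ((dY 3 x).mul (dpH 3 x))
      rw [pd_congr e00 1 x,
        pd_sub (((dω x).fun_mul (dH x)).fun_sub ((dH x).fun_mul (dpY 0 0 x))) (hsum.const_mul (1/2)) 1,
        pd_sub ((dω x).fun_mul (dH x)) ((dH x).fun_mul (dpY 0 0 x)) 1,
        pd_mul (dω x) (dH x) 1,
        pd_mul (dH x) (dpY 0 0 x) 1,
        pd_const_mul (1/2) hsum 1,
        pd_add (((dY 0 x).fun_mul (dpH 0 x)).fun_add ((dY 2 x).fun_mul (dpH 2 x))) ((dY 3 x).fun_mul (dpH 3 x)) 1,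
        pd_add ((dY 0 x).fun_mul (dpH 0 x)) ((dY 2 x).fun_mul (dpH 2 x)) 1,
        pd_mul (dY 0 x) (dpH 0 x) 1, pd_mul (dY 2 x) (dpH 2 x) 1, pd_mul (dY 3 x) (dpH 3 x) 1,
        hH1 x, hH1' 0 x, hH1' 2 x, hH1' 3 x, e11 x, f0 0 x]
      ring
    linarith
  -- second v-derivative identities
  have dd1 : ∀ y, pd (pd (fun y => Y y 1) 1) 1 y = 2 * pd ω 1 y := by
    intro y; rw [f1 1 y, f0 0 y]; ring
  have h2 : ∀ y, pd (pd (fun y => Y y 2) 1) 1 y = 0 := by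
    intro y; rw [f2 1 y, f0 2 y]; ring
  have h3 : ∀ y, pd (pd (fun y => Y y 3) 1) 1 y = 0 := by
    intro y; rw [f3 1 y, f0 3 y]; ring
  have pdom1eq : ∀ y, pd ω 1 y = -pd (pd (fun y => Y y 0) 2) 2 y := by
    intro y; rw [← g1 y, f2 2 y]
  have k1 : ∀ x, pd (pd ω 1) 1 x = 0 := by
    intro x
    rw [pd_congr pdom1eq 1 x, pd_neg, pd_comm (cpY 0 2) 2 1 x, pd_congr (f0 2) 2 x, pd_const]
    ring
  have k2 : ∀ x, pd (pd ω 1) 2 x = 0 := by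
    intro x
    rw [pd_comm hω_smooth 1 2 x, pd_congr gom2 1 x, pd_comm (cpY 0 2) 0 1 x,
      pd_congr (f0 2) 0 x, pd_const]
  have k3 : ∀ x, pd (pd ω 1) 3 x = 0 := by
    intro x
    rw [pd_comm hω_smooth 1 3 x, pd_congr gom3 1 x, pd_comm (cpY 0 3) 0 1 x,
      pd_congr (f0 3) 0 x, pd_const]
  have k0 : ∀ x, pd (pd ω 1) 0 x = 0 := by
    intro x
    rw [pd_comm hω_smooth 1 0 x, pd_congr gom0 1 x]
    have hA : DifferentiableAt ℝ (fun y => (1/2 : ℝ) * pd (pd (fun y => Y y 0) 0) 0 y) x :=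
      (dppY 0 0 0 x).const_mul _
    have hB' : DifferentiableAt ℝ (fun y => pd ω 1 y * H y) x := (dpω 1 x).mul (dH x)
    have hB : DifferentiableAt ℝ (fun y => (1/2 : ℝ) * (pd ω 1 y * H y)) x := hB'.const_mul _
    have hC' : DifferentiableAt ℝ
        (fun y => pd (fun y => Y y 2) 1 y * pd H 2 y + pd (fun y => Y y 3) 1 y * pd H 3 y) x :=
      ((dpY 2 1 x).mul (dpH 2 x)).add ((dpY 3 1 x).mul (dpH 3 x))
    rw [pd_sub (hA.fun_add hB) (hC'.const_mul (1/4)) 1,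
      pd_add hA hB 1,
      pd_const_mul (1/2) (dppY 0 0 0 x) 1,
      pd_const_mul (1/2) hB' 1,
      pd_mul (dpω 1 x) (dH x) 1,
      pd_const_mul (1/4) hC' 1,
      pd_add ((dpY 2 1 x).fun_mul (dpH 2 x)) ((dpY 3 1 x).fun_mul (dpH 3 x)) 1,
      pd_mul (dpY 2 1 x) (dpH 2 x) 1, pd_mul (dpY 3 1 x) (dpH 3 x) 1,
      pd_comm (cpY 0 0) 0 1 x, pd_congr (f0 0) 0 x, pd_const,
      k1 x, hH1 x, hH1' 2 x, hH1' 3 x, h2 x, h3 x]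
    ring
  have kk : ∀ (j : Fin 4) x, pd (pd ω 1) j x = 0 := by
    intro j x; fin_cases j
    · exact k0 x
    · exact k1 x
    · exact k2 x
    · exact k3 x
  -- simplified forms of Υ
  have hU0 : (fun y => Υ y 0) = (fun y => Y y 0) := by
    funext y; simp [hΥ, e11, pd_const]
  have hU1 : (fun y => Υ y 1) = (fun y => Y y 1 + M ^ 2 / 2 * (y 0 * pd (fun y => Y y 1) 1 y)
      + M ^ 4 / 4 * ((y 0) ^ 2 * pd ω 1 y) + ((1 + b) / (2 * (1 - b)) * M ^ 2) * Y y 0) := by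
    funext y; simp [hΥ, dd1]; ring
  have hU2 : (fun y => Υ y 2) = (fun y => Y y 2 + M ^ 2 / 2 * (y 0 * pd (fun y => Y y 2) 1 y)) := by
    funext y; simp [hΥ, h2, pd_const]; ring
  have hU3 : (fun y => Υ y 3) = (fun y => Y y 3 + M ^ 2 / 2 * (y 0 * pd (fun y => Y y 3) 1 y)) := by
    funext y; simp [hΥ, h3, pd_const]; ring
  -- derivatives of Υ
  have pdU0 : ∀ (j : Fin 4) x, pd (fun y => Υ y 0) j x = pd (fun y => Y y 0) j x := by
    intro j x; rw [hU0]
  have pdU2 : ∀ (j : Fin 4) x, pd (fun y => Υ y 2) j x = pd (fun y => Y y 2) j x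
      + M ^ 2 / 2 * ((if (0 : Fin 4) = j then 1 else 0) * pd (fun y => Y y 2) 1 x
        - x 0 * pd (pd (fun y => Y y 0) 2) j x) := by
    intro j x
    have hB' : DifferentiableAt ℝ (fun y => y 0 * pd (fun y => Y y 2) 1 y) x :=
      (diff_coord 0 x).mul (dpY 2 1 x)
    rw [hU2, pd_add (dY 2 x) (hB'.const_mul _) j, pd_const_mul _ hB' j,
      pd_coord_mul (dpY 2 1 x) 0 j, f2 j x]
    ring
  have pdU3 : ∀ (j : Fin 4) x, pd (fun y => Υ y 3) j x = pd (fun y => Y y 3) j x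
      + M ^ 2 / 2 * ((if (0 : Fin 4) = j then 1 else 0) * pd (fun y => Y y 3) 1 x
        - x 0 * pd (pd (fun y => Y y 0) 3) j x) := by
    intro j x
    have hB' : DifferentiableAt ℝ (fun y => y 0 * pd (fun y => Y y 3) 1 y) x :=
      (diff_coord 0 x).mul (dpY 3 1 x)
    rw [hU3, pd_add (dY 3 x) (hB'.const_mul _) j, pd_const_mul _ hB' j,
      pd_coord_mul (dpY 3 1 x) 0 j, f3 j x]
    ring
  have pdU1 : ∀ (j : Fin 4) x, pd (fun y => Υ y 1) j x = pd (fun y => Y y 1) j x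
      + M ^ 2 / 2 * ((if (0 : Fin 4) = j then 1 else 0) * pd (fun y => Y y 1) 1 x
        + x 0 * (2 * pd ω j x - pd (pd (fun y => Y y 0) 0) j x))
      + M ^ 4 / 4 * (2 * x 0 * (if (0 : Fin 4) = j then 1 else 0) * pd ω 1 x)
      + ((1 + b) / (2 * (1 - b)) * M ^ 2) * pd (fun y => Y y 0) j x := by
    intro j x
    have hB' : DifferentiableAt ℝ (fun y => y 0 * pd (fun y => Y y 1) 1 y) x :=
      (diff_coord 0 x).mul (dpY 1 1 x)
    have hC' : DifferentiableAt ℝ (fun y => (y 0) ^ 2 * pd ω 1 y) x :=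
      ((diff_coord 0 x).pow 2).mul (dpω 1 x)
    rw [hU1,
      pd_add (((dY 1 x).fun_add (hB'.const_mul _)).fun_add (hC'.const_mul _)) ((dY 0 x).const_mul _) j,
      pd_add ((dY 1 x).fun_add (hB'.const_mul _)) (hC'.const_mul _) j,
      pd_add (dY 1 x) (hB'.const_mul _) j,
      pd_const_mul _ hB' j, pd_coord_mul (dpY 1 1 x) 0 j,
      pd_const_mul _ hC' j, pd_sq_mul (dpω 1 x) 0 j,
      pd_const_mul _ (dY 0 x) j,
      f1 j x, kk j x]
    ring
  have pdT : ∀ (σ : Fin 4) x, pd (fun y => H y - b / (1 - b) * M ^ 2) σ x = pd H σ x := by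
    intro σ x
    rw [pd_sub (dH x) (differentiableAt_const _) σ, pd_const]
    ring
  have vU0 : ∀ y, Υ y 0 = Y y 0 := fun y => congrFun hU0 y
  have vU2 : ∀ y, Υ y 2 = Y y 2 + M ^ 2 / 2 * (y 0 * pd (fun y => Y y 2) 1 y) :=
    fun y => congrFun hU2 y
  have vU3 : ∀ y, Υ y 3 = Y y 3 + M ^ 2 / 2 * (y 0 * pd (fun y => Y y 3) 1 y) :=
    fun y => congrFun hU3 y
  have cl2 : ∀ x, pd (pd (fun y => Y y 0) 0) 2 x = pd (pd (fun y => Y y 0) 2) 0 x :=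
    fun x => pd_comm (cY 0) 0 2 x
  have cl3 : ∀ x, pd (pd (fun y => Y y 0) 0) 3 x = pd (pd (fun y => Y y 0) 3) 0 x :=
    fun x => pd_comm (cY 0) 0 3 x
  have nn3 : ∀ x, pd (pd (fun y => Y y 0) 3) 3 x = pd (pd (fun y => Y y 0) 2) 2 x := by
    intro x
    have t1 := g1' x
    have t2 := f3 3 x
    have t3 := pdom1eq x
    linarith
  intro x μ ν
  fin_cases μ <;> fin_cases ν <;>
    (simp only [lieD, Fin.sum_univ_four]
     simp only [pdU0, pdU1, pdU2, pdU3]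
     simp [ppMetric, ppK, pd_const, pdT, hΩ,
       vU0, vU2, vU3, e11, e12, e13, e22, e23, e33, e01, e02, e03, e00, f0, f0a, f1, f2, f3,
       m23, m23', gom2, gom3, gom0, kk, hH1, hH1', pdom1eq, cl2, cl3, nn3]) <;>
    field_simp <;>
    ring
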